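/- Let T ∈ (0,∞], let u : [0,T) → [0,∞) be continuous, and let M₀, A, B, α ≥ 0, ω > 0, ω' ∈ [0,ω) be constants. Let K : [0,∞) → [0,∞) be locally integrable with A · ∫₀ᵗ K(z) dz ≤ α + ω'·t for all t ≥ 0. Assume that for every t ∈ [0,T): e^{ωt} u(t) ≤ M₀ + A ∫₀ᵗ e^{ωz} K(z) u(z) dz + B ∫₀ᵗ e^{ωs} u(s) ds. Then u(t) ≤ M₀ · e^{α} · e^{−(ω − ω' − B)t} for every t ∈ [0,T). -/
import Mathlib


open scoped ENNReal

open MeasureTheory Set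

private lemma aux_exp_ineq {Δ ε : ℝ} (h0 : 0 ≤ Δ) (hΔε : Δ ≤ ε) (hε : ε < 1) :
    1 ≤ (1 - Δ) * Real.exp (Δ / (1 - ε)) := by
  have h1ε : 0 < 1 - ε := by linarith
  have hexp : 1 + Δ / (1 - ε) ≤ Real.exp (Δ / (1 - ε)) := by
    simpa [add_comm] using Real.add_one_le_exp (Δ / (1 - ε))
  have hΔ1 : 0 ≤ 1 - Δ := by linarith
  have key : (1 - Δ) * (1 + Δ / (1 - ε)) - 1 = Δ * (ε - Δ) / (1 - ε) := by
    field_simp; ring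
  have hkey : 0 ≤ Δ * (ε - Δ) / (1 - ε) :=
    div_nonneg (mul_nonneg h0 (by linarith)) h1ε.le
  calc (1:ℝ) ≤ (1 - Δ) * (1 + Δ / (1 - ε)) := by linarith
    _ ≤ (1 - Δ) * Real.exp (Δ / (1 - ε)) := mul_le_mul_of_nonneg_left hexp hΔ1

private lemma gronwall_aux (t₀ : ℝ) (ht₀ : 0 ≤ t₀) (g v : ℝ → ℝ)
    (hg0 : ∀ z ∈ Set.Icc (0:ℝ) t₀, 0 ≤ g z)
    (hgint : IntervalIntegrable g volume 0 t₀)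
    (hv : ContinuousOn v (Set.Icc 0 t₀))
    (hv0 : ∀ z ∈ Set.Icc (0:ℝ) t₀, 0 ≤ v z)
    (M₀ : ℝ) (hM₀ : 0 ≤ M₀)
    (h : ∀ t ∈ Set.Icc (0:ℝ) t₀, v t ≤ M₀ + ∫ z in (0:ℝ)..t, g z * v z) :
    v t₀ ≤ M₀ * Real.exp (∫ z in (0:ℝ)..t₀, g z) := by
  have huIcc : Set.uIcc (0:ℝ) t₀ = Set.Icc 0 t₀ := Set.uIcc_of_le ht₀
  have hgv : IntervalIntegrable (fun z => g z * v z) volume 0 t₀ :=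
    hgint.mul_continuousOn (huIcc ▸ hv)
  have hgv0 : ∀ z ∈ Set.Icc (0:ℝ) t₀, 0 ≤ g z * v z :=
    fun z hz => mul_nonneg (hg0 z hz) (hv0 z hz)
  -- sub-interval inclusion
  have hsubIcc : ∀ x y : ℝ, 0 ≤ x → y ≤ t₀ → x ≤ y →
      Set.uIcc x y ⊆ Set.uIcc 0 t₀ := by
    intro x y hx hy hxy
    rw [huIcc, Set.uIcc_of_le hxy]
    exact Set.Icc_subset_Icc hx hy
  -- monotonicity of primitives of nonneg functions
  have hmono : ∀ (f : ℝ → ℝ), IntervalIntegrable f volume 0 t₀ →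
      (∀ z ∈ Set.Icc (0:ℝ) t₀, 0 ≤ f z) →
      ∀ x y : ℝ, 0 ≤ x → x ≤ y → y ≤ t₀ →
        (∫ z in (0:ℝ)..x, f z) ≤ ∫ z in (0:ℝ)..y, f z := by
    intro f hf hf0 x y hx hxy hy
    have h1 : IntervalIntegrable f volume 0 x :=
      hf.mono_set (hsubIcc 0 x le_rfl (hxy.trans hy) hx)
    have h2 : IntervalIntegrable f volume x y :=
      hf.mono_set (hsubIcc x y hx hy hxy)
    have hadd := intervalIntegral.integral_add_adjacent_intervals h1 h2
    have hpos : 0 ≤ ∫ z in x..y, f z :=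
      intervalIntegral.integral_nonneg hxy
        (fun u hu => hf0 u ⟨hx.trans hu.1, hu.2.trans hy⟩)
    linarith
  set w : ℝ → ℝ := fun t => M₀ + ∫ z in (0:ℝ)..t, g z * v z with hw
  set G : ℝ → ℝ := fun t => ∫ z in (0:ℝ)..t, g z with hG
  have hw_cont : ContinuousOn w (Set.Icc 0 t₀) := by
    refine continuousOn_const.add ?_
    have := intervalIntegral.continuousOn_primitive_interval'
      (μ := volume) (f := fun z => g z * v z) (b₁ := (0:ℝ)) (b₂ := t₀) hgv
      Set.left_mem_uIcc
    rwa [huIcc] at this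
  have hG_cont : ContinuousOn G (Set.Icc 0 t₀) := by
    have := intervalIntegral.continuousOn_primitive_interval'
      (μ := volume) (f := g) (b₁ := (0:ℝ)) (b₂ := t₀) hgint Set.left_mem_uIcc
    rwa [huIcc] at this
  have hw0 : ∀ t ∈ Set.Icc (0:ℝ) t₀, 0 ≤ w t := by
    intro t ht
    have : (0:ℝ) ≤ ∫ z in (0:ℝ)..t, g z * v z := by
      have := hmono _ hgv hgv0 0 t le_rfl ht.1 ht.2
      simpa using this
    simp only [hw]; linarith
  have hvw : ∀ t ∈ Set.Icc (0:ℝ) t₀, v t ≤ w t := h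
  have hw_mono : ∀ x y : ℝ, 0 ≤ x → x ≤ y → y ≤ t₀ → w x ≤ w y := by
    intro x y hx hxy hy
    have := hmono _ hgv hgv0 x y hx hxy hy
    simp only [hw]; linarith
  -- the key claim for each ε ∈ (0,1)
  have key : ∀ ε ∈ Set.Ioo (0:ℝ) 1, ∀ t ∈ Set.Icc (0:ℝ) t₀,
      w t ≤ M₀ * Real.exp (G t / (1 - ε)) := by
    intro ε hε
    set S : Set ℝ := {t | w t ≤ M₀ * Real.exp (G t / (1 - ε))} with hS
    have hclosed : IsClosed (S ∩ Set.Icc 0 t₀) := by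
      have hcont : ContinuousOn
          (fun t => w t - M₀ * Real.exp (G t / (1 - ε))) (Set.Icc 0 t₀) :=
        hw_cont.sub (continuousOn_const.mul
          (Real.continuous_exp.comp_continuousOn (hG_cont.div_const _)))
      have := hcont.preimage_isClosed_of_isClosed (t := Set.Iic (0:ℝ)) isClosed_Icc isClosed_Iic
      have heq : S ∩ Set.Icc 0 t₀ =
          Set.Icc 0 t₀ ∩ (fun t => w t - M₀ * Real.exp (G t / (1 - ε))) ⁻¹' Set.Iic 0 := by
        ext x
        simp [hS, Set.mem_Iic, sub_nonpos, and_comm]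
      rw [heq]; exact this
    have h0S : (0:ℝ) ∈ S := by
      have hw0' : w 0 = M₀ := by simp [hw]
      have hG0 : G 0 = 0 := by simp [hG]
      simp [hS, hw0', hG0]
    have hstep : ∀ x ∈ S ∩ Set.Ico 0 t₀, ∀ y ∈ Set.Ioi x, (S ∩ Set.Ioc x y).Nonempty := by
      intro x hx y hy
      have hxS := hx.1
      have hx0 := hx.2.1
      have hxt := hx.2.2
      -- continuity of G at x within Icc gives δ
      have hGx : ContinuousWithinAt G (Set.Icc 0 t₀) x := hG_cont x ⟨hx0, hxt.le⟩
      rw [Metric.continuousWithinAt_iff] at hGx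
      obtain ⟨δ, hδ, hδ'⟩ := hGx ε hε.1
      set y' : ℝ := min y (min (x + δ/2) t₀) with hy'
      have hxy' : x < y' := by
        simp only [hy', lt_min_iff]
        exact ⟨hy, by linarith, hxt⟩
      have hy't : y' ≤ t₀ := le_trans (min_le_right _ _) (min_le_right _ _)
      have hy'0 : 0 ≤ y' := hx0.trans hxy'.le
      have hy'mem : y' ∈ Set.Icc (0:ℝ) t₀ := ⟨hy'0, hy't⟩
      have hdist : dist y' x < δ := by
        rw [Real.dist_eq, abs_of_nonneg (by linarith)]
        have : y' ≤ x + δ/2 := le_trans (min_le_right _ _) (min_le_left _ _)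
        linarith
      have hΔle : G y' - G x < ε := by
        have := hδ' hy'mem hdist
        rw [Real.dist_eq] at this
        calc G y' - G x ≤ |G y' - G x| := le_abs_self _
          _ < ε := this
      have hΔ0 : 0 ≤ G y' - G x := by
        have := hmono g hgint hg0 x y' hx0 hxy'.le hy't
        simp only [hG]; linarith
      set Δ : ℝ := G y' - G x with hΔ
      -- integral inequality
      have hint1 : IntervalIntegrable (fun z => g z * v z) volume x y' :=
        hgv.mono_set (hsubIcc x y' hx0 hy't hxy'.le)
      have hint2 : IntervalIntegrable (fun z => g z * w y') volume x y' :=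
        (hgint.mono_set (hsubIcc x y' hx0 hy't hxy'.le)).mul_const _
      have hptwise : ∀ z ∈ Set.Icc x y', g z * v z ≤ g z * w y' := by
        intro z hz
        have hzmem : z ∈ Set.Icc (0:ℝ) t₀ := ⟨hx0.trans hz.1, hz.2.trans hy't⟩
        exact mul_le_mul_of_nonneg_left
          ((hvw z hzmem).trans (hw_mono z y' hzmem.1 hz.2 hy't)) (hg0 z hzmem)
      have hintle : (∫ z in x..y', g z * v z) ≤ ∫ z in x..y', g z * w y' :=
        intervalIntegral.integral_mono_on hxy'.le hint1 hint2 hptwise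
      have hGsplit : (∫ z in (0:ℝ)..x, g z) + (∫ z in x..y', g z)
          = ∫ z in (0:ℝ)..y', g z :=
        intervalIntegral.integral_add_adjacent_intervals
          (hgint.mono_set (hsubIcc 0 x le_rfl hxt.le hx0))
          (hgint.mono_set (hsubIcc x y' hx0 hy't hxy'.le))
      have hGR : (∫ z in x..y', g z) = Δ := by simp only [hΔ, hG]; linarith
      have hconst : (∫ z in x..y', g z * w y') = Δ * w y' := by
        rw [intervalIntegral.integral_mul_const, hGR]
      have hwsplit : (∫ z in (0:ℝ)..x, g z * v z) + (∫ z in x..y', g z * v z)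
          = ∫ z in (0:ℝ)..y', g z * v z :=
        intervalIntegral.integral_add_adjacent_intervals
          (hgv.mono_set (hsubIcc 0 x le_rfl hxt.le hx0)) hint1
      have hwy' : w y' ≤ w x + Δ * w y' := by
        have : w y' - w x = ∫ z in x..y', g z * v z := by
          simp only [hw]; linarith
        calc w y' = w x + ∫ z in x..y', g z * v z := by linarith
          _ ≤ w x + ∫ z in x..y', g z * w y' := by linarith
          _ = w x + Δ * w y' := by rw [hconst]
      -- conclude y' ∈ S
      have hwy'0 : 0 ≤ w y' := hw0 y' hy'mem
      have hineq : w y' * (1 - Δ) ≤ w x := by nlinarith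
      have hexp0 : (0:ℝ) < Real.exp (Δ / (1 - ε)) := Real.exp_pos _
      have h1 : w y' ≤ w y' * ((1 - Δ) * Real.exp (Δ / (1 - ε))) := by
        have := mul_le_mul_of_nonneg_left (aux_exp_ineq hΔ0 hΔle.le hε.2) hwy'0
        simpa using this
      have h2 : w y' ≤ w x * Real.exp (Δ / (1 - ε)) := by
        calc w y' ≤ w y' * ((1 - Δ) * Real.exp (Δ / (1 - ε))) := h1
          _ = (w y' * (1 - Δ)) * Real.exp (Δ / (1 - ε)) := by ring
          _ ≤ w x * Real.exp (Δ / (1 - ε)) :=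
            mul_le_mul_of_nonneg_right hineq hexp0.le
      have h3 : w y' ≤ M₀ * Real.exp (G y' / (1 - ε)) := by
        have hxSle : w x ≤ M₀ * Real.exp (G x / (1 - ε)) := hxS
        calc w y' ≤ w x * Real.exp (Δ / (1 - ε)) := h2
          _ ≤ (M₀ * Real.exp (G x / (1 - ε))) * Real.exp (Δ / (1 - ε)) :=
            mul_le_mul_of_nonneg_right hxSle hexp0.le
          _ = M₀ * Real.exp (G y' / (1 - ε)) := by
            rw [mul_assoc, ← Real.exp_add]
            congr 1
            rw [hΔ]
            ring_nf
      exact ⟨y', h3, ⟨hxy', min_le_left _ _⟩⟩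
    exact fun t ht => hclosed.Icc_subset_of_forall_exists_gt h0S hstep ht
  -- take ε → 0⁺
  have hvwt : v t₀ ≤ w t₀ := hvw t₀ ⟨ht₀, le_rfl⟩
  have hc : ContinuousAt (fun ε : ℝ => M₀ * Real.exp (G t₀ / (1 - ε))) 0 := by
    have h1 : ContinuousAt (fun ε : ℝ => (1:ℝ) - ε) 0 := by fun_prop
    have h2 : ContinuousAt (fun ε : ℝ => G t₀ / (1 - ε)) 0 :=
      ContinuousAt.div continuousAt_const h1 (by norm_num)
    exact continuousAt_const.mul (Real.continuous_exp.continuousAt.comp h2)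
  have htend : Filter.Tendsto (fun ε : ℝ => M₀ * Real.exp (G t₀ / (1 - ε)))
      (nhdsWithin 0 (Set.Ioi 0)) (nhds (M₀ * Real.exp (G t₀))) := by
    have := hc.tendsto.mono_left (nhdsWithin_le_nhds (s := Set.Ioi (0:ℝ)))
    simpa using this
  have hev : ∀ᶠ ε in nhdsWithin 0 (Set.Ioi (0:ℝ)),
      w t₀ ≤ M₀ * Real.exp (G t₀ / (1 - ε)) := by
    filter_upwards [Ioo_mem_nhdsGT_of_mem (Set.mem_Ico.mpr ⟨le_rfl, one_pos⟩)] with ε hε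
    exact key ε hε t₀ ⟨ht₀, le_rfl⟩
  exact hvwt.trans (ge_of_tendsto htend hev)

/-- Gronwall-type estimate of Theorem 3.2: under the Duhamel-type inequality
`e^{ωt} u(t) ≤ M₀ + A ∫₀ᵗ e^{ωz} K(z) u(z) dz + B ∫₀ᵗ e^{ωs} u(s) ds` on `[0,T)`,
with `A ∫₀ᵗ K ≤ α + ω't`, one has `u(t) ≤ M₀ e^{α} e^{−(ω − ω' − B)t}` on `[0,T)`. -/
theorem stmt4 (T : ℝ≥0∞) (hT : 0 < T) (u : ℝ → ℝ)
    (hu_nonneg : ∀ t : ℝ, 0 ≤ t → ENNReal.ofReal t < T → 0 ≤ u t)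
    (hu_cont : ContinuousOn u {t : ℝ | 0 ≤ t ∧ ENNReal.ofReal t < T})
    (M₀ A B α ω ω' : ℝ) (hM₀ : 0 ≤ M₀) (hA : 0 ≤ A) (hB : 0 ≤ B) (hα : 0 ≤ α)
    (hω : 0 < ω) (hω' : 0 ≤ ω') (hω'ω : ω' < ω)
    (K : ℝ → ℝ) (hK_nonneg : ∀ x : ℝ, 0 ≤ x → 0 ≤ K x)
    (hK_int : ∀ t : ℝ, 0 ≤ t → IntervalIntegrable K MeasureTheory.volume 0 t)
    (hK_bound : ∀ t : ℝ, 0 ≤ t → A * ∫ z in (0 : ℝ)..t, K z ≤ α + ω' * t)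
    (hmain : ∀ t : ℝ, 0 ≤ t → ENNReal.ofReal t < T →
      Real.exp (ω * t) * u t ≤
        M₀ + A * (∫ z in (0 : ℝ)..t, Real.exp (ω * z) * K z * u z)
          + B * (∫ s in (0 : ℝ)..t, Real.exp (ω * s) * u s)) :
    ∀ t : ℝ, 0 ≤ t → ENNReal.ofReal t < T →
      u t ≤ M₀ * Real.exp α * Real.exp (-(ω - ω' - B) * t) := by
  intro t ht htT
  have hsub : Set.Icc (0:ℝ) t ⊆ {s : ℝ | 0 ≤ s ∧ ENNReal.ofReal s < T} :=
    fun s hs => ⟨hs.1, lt_of_le_of_lt (ENNReal.ofReal_le_ofReal hs.2) htT⟩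
  set v : ℝ → ℝ := fun s => Real.exp (ω * s) * u s with hvdef
  set g : ℝ → ℝ := fun z => A * K z + B with hgdef
  have huIcc : Set.uIcc (0:ℝ) t = Set.Icc 0 t := Set.uIcc_of_le ht
  have hv_cont : ContinuousOn v (Set.Icc 0 t) :=
    ((Real.continuous_exp.comp (continuous_const.mul continuous_id)).continuousOn).mul
      (hu_cont.mono hsub)
  have hv0 : ∀ z ∈ Set.Icc (0:ℝ) t, 0 ≤ v z := by
    intro z hz
    exact mul_nonneg (Real.exp_pos _).le (hu_nonneg z (hsub hz).1 (hsub hz).2)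
  have hg_int : IntervalIntegrable g volume 0 t :=
    ((hK_int t ht).const_mul A).add intervalIntegrable_const
  have hg0 : ∀ z ∈ Set.Icc (0:ℝ) t, 0 ≤ g z :=
    fun z hz => add_nonneg (mul_nonneg hA (hK_nonneg z hz.1)) hB
  -- the Duhamel hypothesis in the combined form
  have hcomb : ∀ s ∈ Set.Icc (0:ℝ) t, v s ≤ M₀ + ∫ z in (0:ℝ)..s, g z * v z := by
    intro s hs
    have hs0 : 0 ≤ s := hs.1
    have hsT : ENNReal.ofReal s < T := (hsub hs).2
    have hsubuIcc : Set.uIcc (0:ℝ) s ⊆ Set.Icc (0:ℝ) t := by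
      rw [Set.uIcc_of_le hs0]; exact Set.Icc_subset_Icc le_rfl hs.2
    have hvint : IntervalIntegrable v volume 0 s :=
      (hv_cont.mono hsubuIcc).intervalIntegrable
    have hKv : IntervalIntegrable (fun z => K z * v z) volume 0 s :=
      (hK_int s hs0).mul_continuousOn (hv_cont.mono hsubuIcc)
    have heq : (∫ z in (0:ℝ)..s, g z * v z)
        = A * (∫ z in (0:ℝ)..s, Real.exp (ω * z) * K z * u z)
          + B * (∫ z in (0:ℝ)..s, Real.exp (ω * z) * u z) := by
      have e1 : (∫ z in (0:ℝ)..s, g z * v z)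
          = ∫ z in (0:ℝ)..s, (A * (K z * v z) + B * v z) := by
        apply intervalIntegral.integral_congr
        intro z _
        simp only [hgdef]
        ring
      have e2 : (∫ z in (0:ℝ)..s, (A * (K z * v z) + B * v z))
          = A * (∫ z in (0:ℝ)..s, K z * v z) + B * (∫ z in (0:ℝ)..s, v z) := by
        rw [intervalIntegral.integral_add (hKv.const_mul A) (hvint.const_mul B),
          intervalIntegral.integral_const_mul, intervalIntegral.integral_const_mul]
      have e3 : (∫ z in (0:ℝ)..s, K z * v z)
          = ∫ z in (0:ℝ)..s, Real.exp (ω * z) * K z * u z := by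
        apply intervalIntegral.integral_congr
        intro z _
        simp only [hvdef]
        ring
      rw [e1, e2, e3]
    rw [heq, ← add_assoc]
    exact hmain s hs0 hsT
  have hmain2 := gronwall_aux t ht g v hg0 hg_int hv_cont hv0 M₀ hM₀ hcomb
  -- compute ∫ g
  have hGcalc : (∫ z in (0:ℝ)..t, g z) = A * (∫ z in (0:ℝ)..t, K z) + B * t := by
    simp only [hgdef]
    rw [intervalIntegral.integral_add ((hK_int t ht).const_mul A) intervalIntegrable_const,
      intervalIntegral.integral_const_mul, intervalIntegral.integral_const]
    simp [mul_comm]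
  have hGle : (∫ z in (0:ℝ)..t, g z) ≤ α + ω' * t + B * t := by
    rw [hGcalc]
    have := hK_bound t ht
    linarith
  have hvt : v t ≤ M₀ * Real.exp (α + ω' * t + B * t) :=
    hmain2.trans (mul_le_mul_of_nonneg_left (Real.exp_le_exp.mpr hGle) hM₀)
  -- unwind
  have hexp : Real.exp (ω * t) * u t = v t := rfl
  have hfin : Real.exp (ω * t) * u t ≤ M₀ * Real.exp (α + ω' * t + B * t) := by
    rw [hexp]; exact hvt
  have hrhs : M₀ * Real.exp α * Real.exp (-(ω - ω' - B) * t) * Real.exp (ω * t)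
      = M₀ * Real.exp (α + ω' * t + B * t) := by
    rw [mul_assoc, ← Real.exp_add, mul_assoc, ← Real.exp_add]
    ring_nf
  have hpos : (0:ℝ) < Real.exp (ω * t) := Real.exp_pos _
  nlinarith [hfin, hrhs, hpos]
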